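/- arXiv:2503.18262 — 4 statements merged into one kernel-verified Lean document; each statement's English description precedes it below -/
import Mathlib

section
/- For θ₁, θ₂ ∈ F_{q^3}^*, the sets S_{θ₁} = {(xθ₁, x^q) : x ∈ F_{q^3}^*} and S_{θ₂} = {(xθ₂, x^q) : x ∈ F_{q^3}^*} (viewed as sets of projective points of PG(1,q^3), i.e., pairs up to F_{q^3}^*-scalar) are equal if and only if N(θ₁) = N(θ₂), where N(θ) = θ^{q^2+q+1}. -/
/-!
Since `[xθ : x^q] = [θ : x^(q-1)]`, the sets `S_θ₁` and `S_θ₂` coincide exactly when `θ₁ / θ₂` is a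
`(q-1)`-th power in `F^*`. This group is cyclic of order `(q - 1)(q² + q + 1)`, so its `(q-1)`-th
powers are precisely the kernel of the norm `x ↦ x^(q² + q + 1)`.
-/

open scoped LinearAlgebra.Projectivization
open Projectivization

theorem IsCyclic.range_powMonoidHom_eq_ker {G : Type*} [CommGroup G] [IsCyclic G] [Finite G]
    {a b : ℕ} (h : Nat.card G = a * b) :
    (powMonoidHom a : G →* G).range = (powMonoidHom b).ker := by
  have hab : a * b ≠ 0 := h ▸ Nat.card_pos.ne'
  refine Subgroup.eq_of_le_of_card_ge ?_ ?_
  · rintro _ ⟨y, rfl⟩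
    simp only [MonoidHom.mem_ker, powMonoidHom_apply, ← pow_mul, ← h, pow_card_eq_one']
  · rw [IsCyclic.card_powMonoidHom_range, IsCyclic.card_powMonoidHom_ker, h,
      Nat.gcd_mul_right_left, Nat.gcd_mul_left_left,
      Nat.mul_div_cancel_left _ (Nat.pos_of_ne_zero (left_ne_zero_of_mul hab))]

section ScatteredLinearSet

variable {F : Type*} [Field F] (q : ℕ)

def scatteredLinearSet (θ : F) : Set (ℙ F (F × F)) :=
  {P | ∃ x : F, ∃ h : ((x * θ, x ^ q) : F × F) ≠ 0, x ≠ 0 ∧ P = mk F (x * θ, x ^ q) h}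

variable {q}

theorem scatteredLinearSet_subset_of_mul_eq_pow_mul {θ₁ θ₂ u : F} (hu : u ≠ 0)
    (h : u * θ₁ = u ^ q * θ₂) : scatteredLinearSet q θ₁ ⊆ scatteredLinearSet q θ₂ := by
  rintro _ ⟨x, -, hx, rfl⟩
  have hy : x * u⁻¹ ≠ 0 := mul_ne_zero hx (inv_ne_zero hu)
  refine ⟨x * u⁻¹, fun h0 => pow_ne_zero q hy (congrArg Prod.snd h0), hy, ?_⟩
  rw [mk_eq_mk_iff']
  refine ⟨u ^ q, ?_⟩
  simp only [Prod.smul_mk, smul_eq_mul, Prod.mk.injEq, mul_pow, inv_pow]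
  constructor
  · rw [mul_left_comm, ← h]; field_simp
  · field_simp

/-- `u * θ₁ = u ^ q * θ₂` is `θ₁ / θ₂ = u ^ (q - 1)`, stated without truncated subtraction. -/
theorem scatteredLinearSet_eq_iff {θ₁ θ₂ : F} :
    scatteredLinearSet q θ₁ = scatteredLinearSet q θ₂ ↔ ∃ u ≠ 0, u * θ₁ = u ^ q * θ₂ := by
  constructor
  · intro h
    have hmem : mk F ((θ₁, 1) : F × F) (by simp) ∈ scatteredLinearSet q θ₂ :=
      h ▸ ⟨1, by simp, one_ne_zero, by simp⟩
    obtain ⟨y, _, hy, hP⟩ := hmem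
    obtain ⟨c, hc⟩ := (mk_eq_mk_iff' F _ _ _ _).mp hP.symm
    simp only [Prod.smul_mk, smul_eq_mul, mul_one, Prod.mk.injEq] at hc
    obtain ⟨hc, rfl⟩ := hc
    refine ⟨y⁻¹, inv_ne_zero hy, ?_⟩
    rw [inv_pow]
    field_simp
    linear_combination hc
  · rintro ⟨u, hu, h⟩
    refine (scatteredLinearSet_subset_of_mul_eq_pow_mul hu h).antisymm
      (scatteredLinearSet_subset_of_mul_eq_pow_mul (inv_ne_zero hu) ?_)
    rw [inv_pow]
    field_simp
    linear_combination h.symm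

end ScatteredLinearSet

theorem exists_mul_eq_pow_mul_iff_pow_eq_pow {q : ℕ} {F : Type*} [Field F] [Fintype F]
    (hF : Fintype.card F = q ^ 3) {θ₁ θ₂ : F} (h₁ : θ₁ ≠ 0) (h₂ : θ₂ ≠ 0) :
    (∃ u ≠ 0, u * θ₁ = u ^ q * θ₂) ↔ θ₁ ^ (q ^ 2 + q + 1) = θ₂ ^ (q ^ 2 + q + 1) := by
  constructor
  · rintro ⟨u, hu, h⟩
    have hpow : u ^ (q * (q ^ 2 + q + 1)) = u ^ (q ^ 2 + q + 1) := by
      rw [show q * (q ^ 2 + q + 1) = q ^ 3 + (q ^ 2 + q) by ring, pow_add, ← hF,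
        FiniteField.pow_card, ← pow_succ']
    apply mul_left_cancel₀ (pow_ne_zero (q ^ 2 + q + 1) hu)
    rw [← mul_pow, h, mul_pow, ← pow_mul, hpow]
  · intro h
    obtain ⟨p, rfl⟩ : ∃ p, q = p + 1 :=
      Nat.exists_eq_succ_of_ne_zero (by rintro rfl; simp at hF)
    have hcard : Nat.card Fˣ = p * ((p + 1) ^ 2 + (p + 1) + 1) := by
      rw [Nat.card_units, Nat.card_eq_fintype_card, hF]
      ring_nf; omega
    have hz : (Units.mk0 θ₁ h₁ / Units.mk0 θ₂ h₂) ^ ((p + 1) ^ 2 + (p + 1) + 1) = 1 := by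
      ext; simp [div_pow, h, h₂]
    obtain ⟨v, hv⟩ := (IsCyclic.range_powMonoidHom_eq_ker hcard).ge hz
    have hv' : (v : F) ^ p = θ₁ / θ₂ := by simpa using congrArg Units.val hv
    exact ⟨v, v.ne_zero, by rw [pow_succ', mul_assoc, hv', div_mul_cancel₀ _ h₂]⟩

theorem sls_eq_iff_norm_eq_general (q : ℕ) (F : Type*) [Field F] [Fintype F]
    (hF : Fintype.card F = q ^ 3) (θ₁ θ₂ : F) (h1 : θ₁ ≠ 0) (h2 : θ₂ ≠ 0) :
    {P : Projectivization F (F × F) | ∃ x : F, ∃ h : ((x * θ₁, x ^ q) : F × F) ≠ 0,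
        x ≠ 0 ∧ P = Projectivization.mk F (x * θ₁, x ^ q) h} =
      {P : Projectivization F (F × F) | ∃ x : F, ∃ h : ((x * θ₂, x ^ q) : F × F) ≠ 0,
        x ≠ 0 ∧ P = Projectivization.mk F (x * θ₂, x ^ q) h} ↔
      θ₁ ^ (q ^ 2 + q + 1) = θ₂ ^ (q ^ 2 + q + 1) :=
  scatteredLinearSet_eq_iff.trans (exists_mul_eq_pow_mul_iff_pow_eq_pow hF h1 h2)

/-- S_{θ₁} = S_{θ₂} as sets of points of PG(1,q^3) iff N(θ₁) = N(θ₂). -/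
theorem sls_eq_iff_norm_eq (q : ℕ) (hq : IsPrimePow q) (F : Type*) [Field F] [Fintype F]
    (hF : Fintype.card F = q ^ 3) (θ₁ θ₂ : F) (h1 : θ₁ ≠ 0) (h2 : θ₂ ≠ 0) :
    {P : Projectivization F (F × F) | ∃ x : F, ∃ h : ((x * θ₁, x ^ q) : F × F) ≠ 0,
        x ≠ 0 ∧ P = Projectivization.mk F (x * θ₁, x ^ q) h} =
      {P : Projectivization F (F × F) | ∃ x : F, ∃ h : ((x * θ₂, x ^ q) : F × F) ≠ 0,
        x ≠ 0 ∧ P = Projectivization.mk F (x * θ₂, x ^ q) h} ↔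
      θ₁ ^ (q ^ 2 + q + 1) = θ₂ ^ (q ^ 2 + q + 1) :=
  sls_eq_iff_norm_eq_general q F hF θ₁ θ₂ h1 h2
end

section
/- For θ, κ ∈ F_{q^3}^* with N(θ) = N(κ) (where N(x)=x^{q^2+q+1}), the point sets Π_θ = {(rθ^{q+1}, r^q, r^{q^2}θ) : r ∈ F_{q^3}^*} and Π_κ = {(rκ^{q+1}, r^q, r^{q^2}κ) : r ∈ F_{q^3}^*}, viewed as sets of projective points of PG(2,q^3), are equal. -/
/-!
Set `ν = (κ/θ)^(q+1)`. Then `ν^(q^2+q+1) = (N κ / N θ)^(q+1) = 1`, and since `F^*` is cyclic of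
order `(q-1)(q^2+q+1)`, `ν = t^(q-1)` for some `t ≠ 0`. The substitution `r ↦ t r` then maps the
point of `Π_θ` with parameter `r` to the point of `Π_κ` with parameter `t r`: the two coordinate
vectors differ by the scalar `t^q`. By symmetry the two point sets coincide.
-/

open Projectivization

theorem IsCyclic.exists_pow_eq_of_pow_eq_one {G : Type*} [Group G] [IsCyclic G] [Finite G]
    {a b : ℕ} (hcard : Nat.card G = a * b) {x : G} (hx : x ^ b = 1) : ∃ y : G, y ^ a = x := by
  obtain ⟨g, hg⟩ := IsCyclic.exists_monoid_generator (α := G)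
  obtain ⟨k, rfl⟩ := Submonoid.mem_powers_iff _ _ |>.mp (hg x)
  have hb : b ≠ 0 := by
    rintro rfl
    exact Nat.card_pos.ne' (by simpa using hcard)
  have hdvd : a * b ∣ k * b := by
    rw [← hcard, ← orderOf_eq_card_of_forall_mem_powers hg, orderOf_dvd_iff_pow_eq_one, pow_mul, hx]
  obtain ⟨j, rfl⟩ := Nat.dvd_of_mul_dvd_mul_right (Nat.pos_of_ne_zero hb) hdvd
  exact ⟨g ^ j, by rw [← pow_mul, mul_comm]⟩

theorem FiniteField.exists_pow_sub_one_eq_of_pow_eq_one {F : Type*} [Field F] [Fintype F] {q : ℕ}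
    (hF : Fintype.card F = q ^ 3) {ν : F} (hν : ν ^ (q ^ 2 + q + 1) = 1) :
    ∃ t : F, t ≠ 0 ∧ t ^ (q - 1) = ν := by
  have hν0 : ν ≠ 0 := by
    rintro rfl
    simp at hν
  have hcard : Nat.card Fˣ = (q - 1) * (q ^ 2 + q + 1) := by
    rw [Nat.card_units, Nat.card_eq_fintype_card, hF]
    rcases q with _ | p
    · rfl
    · simp only [Nat.add_sub_cancel]
      ring_nf
      omega
  obtain ⟨t, ht⟩ := IsCyclic.exists_pow_eq_of_pow_eq_one hcard (x := Units.mk0 ν hν0)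
    (Units.ext (by simpa using hν))
  exact ⟨t, t.ne_zero, by simpa using congrArg Units.val ht⟩

section TPlane

variable {F : Type*} [Field F] (q : ℕ)

def tPlane (θ : F) : Set (Projectivization F (F × F × F)) :=
  {P | ∃ r : F, ∃ hr : ((r * θ ^ (q + 1), r ^ q, r ^ (q ^ 2) * θ) : F × F × F) ≠ 0,
    r ≠ 0 ∧ P = mk F (r * θ ^ (q + 1), r ^ q, r ^ (q ^ 2) * θ) hr}

theorem tPlane_vector_eq_smul {θ κ t : F} (hq : q ≠ 0) (hθ : θ ≠ 0)
    (h : θ ^ (q ^ 2 + q + 1) = κ ^ (q ^ 2 + q + 1)) (ht : t ^ (q - 1) * θ ^ (q + 1) = κ ^ (q + 1))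
    (r : F) :
    (((t * r) * κ ^ (q + 1), (t * r) ^ q, (t * r) ^ (q ^ 2) * κ) : F × F × F) =
      t ^ q • (r * θ ^ (q + 1), r ^ q, r ^ (q ^ 2) * θ) := by
  obtain ⟨p, rfl⟩ := Nat.exists_eq_add_one_of_ne_zero hq
  simp only [Nat.add_sub_cancel] at ht
  -- after multiplying by `θ^(q^2+q)`, this is `N κ = N θ` with `ht^q` substituted
  have hthird : t ^ ((p + 1) ^ 2) * κ = t ^ (p + 1) * θ := by
    refine mul_right_cancel₀ (pow_ne_zero ((p + 1) ^ 2 + (p + 1)) hθ) ?_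
    have hpow : (t ^ p * θ ^ (p + 2)) ^ (p + 1) = (κ ^ (p + 2)) ^ (p + 1) := by rw [ht]
    linear_combination t ^ (p + 1) * κ * hpow - t ^ (p + 1) * h
  ext <;> simp only [Prod.smul_mk, smul_eq_mul]
  · linear_combination (-(t * r)) * ht
  · ring
  · linear_combination r ^ ((p + 1) ^ 2) * hthird

theorem tPlane_subset_of_norm_eq [Fintype F] (hF : Fintype.card F = q ^ 3) {θ κ : F} (hθ : θ ≠ 0)
    (h : θ ^ (q ^ 2 + q + 1) = κ ^ (q ^ 2 + q + 1)) : tPlane q θ ⊆ tPlane q κ := by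
  have hq : q ≠ 0 := by
    rintro rfl
    simp at hF
  have hν : ((κ / θ) ^ (q + 1)) ^ (q ^ 2 + q + 1) = 1 := by
    rw [← pow_mul, mul_comm, pow_mul, div_pow, ← h, div_self (pow_ne_zero _ hθ), one_pow]
  obtain ⟨t, ht0, ht⟩ := FiniteField.exists_pow_sub_one_eq_of_pow_eq_one hF hν
  rintro _ ⟨r, hr, hr0, rfl⟩
  have htr : t * r ≠ 0 := mul_ne_zero ht0 hr0
  refine ⟨t * r, fun h0 => pow_ne_zero q htr (congrArg (·.2.1) h0), htr, ?_⟩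
  rw [mk_eq_mk_iff']
  refine ⟨(t ^ q)⁻¹, ?_⟩
  rw [tPlane_vector_eq_smul q hq hθ h (by rw [ht, div_pow, div_mul_cancel₀ _ (pow_ne_zero _ hθ)]),
    smul_smul, inv_mul_cancel₀ (pow_ne_zero q ht0), one_smul]

end TPlane

theorem Tplane_eq_of_norm_eq_general (q : ℕ) (F : Type*) [Field F] [Fintype F]
    (hF : Fintype.card F = q ^ 3) (θ κ : F) (hθ : θ ≠ 0) (hκ : κ ≠ 0)
    (h : θ ^ (q ^ 2 + q + 1) = κ ^ (q ^ 2 + q + 1)) :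
    {P : Projectivization F (F × F × F) | ∃ r : F,
        ∃ hr : ((r * θ ^ (q + 1), r ^ q, r ^ (q ^ 2) * θ) : F × F × F) ≠ 0,
        r ≠ 0 ∧ P = Projectivization.mk F (r * θ ^ (q + 1), r ^ q, r ^ (q ^ 2) * θ) hr} =
      {P : Projectivization F (F × F × F) | ∃ r : F,
        ∃ hr : ((r * κ ^ (q + 1), r ^ q, r ^ (q ^ 2) * κ) : F × F × F) ≠ 0,
        r ≠ 0 ∧ P = Projectivization.mk F (r * κ ^ (q + 1), r ^ q, r ^ (q ^ 2) * κ) hr} := by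
  show tPlane q θ = tPlane q κ
  exact (tPlane_subset_of_norm_eq q hF hθ h).antisymm (tPlane_subset_of_norm_eq q hF hκ h.symm)

/-- If N(θ) = N(κ), then the T-planes Π_θ and Π_κ are equal as sets of projective
points of PG(2,q^3). -/
theorem Tplane_eq_of_norm_eq (q : ℕ) (hq : IsPrimePow q) (F : Type*) [Field F] [Fintype F]
    (hF : Fintype.card F = q ^ 3) (θ κ : F) (hθ : θ ≠ 0) (hκ : κ ≠ 0)
    (h : θ ^ (q ^ 2 + q + 1) = κ ^ (q ^ 2 + q + 1)) :
    {P : Projectivization F (F × F × F) | ∃ r : F,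
        ∃ hr : ((r * θ ^ (q + 1), r ^ q, r ^ (q ^ 2) * θ) : F × F × F) ≠ 0,
        r ≠ 0 ∧ P = Projectivization.mk F (r * θ ^ (q + 1), r ^ q, r ^ (q ^ 2) * θ) hr} =
      {P : Projectivization F (F × F × F) | ∃ r : F,
        ∃ hr : ((r * κ ^ (q + 1), r ^ q, r ^ (q ^ 2) * κ) : F × F × F) ≠ 0,
        r ≠ 0 ∧ P = Projectivization.mk F (r * κ ^ (q + 1), r ^ q, r ^ (q ^ 2) * κ) hr} :=
  Tplane_eq_of_norm_eq_general q F hF θ κ hθ hκ h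
end

section
/- Let θ, κ ∈ F_{q^3}^* with N(θ) ≠ N(κ). Fix s ∈ F_{q^3}^* and let P = (sκ^{q+1}, s^q, s^{q^2}κ). For every t ∈ F_{q^3}^*, the line through P and Q_t = (tθ^{q+1}, t^q, t^{q^2}θ) meets the line z = 0 in a point of the form (-κθ·c, c^q, 0) where c = 1/(s^q t^{q^2}θ - s^{q^2} t^q κ); in particular the projection of Π_θ from P onto the line z=0 is contained in S_{-κθ}. -/
section Aux

variable (q : ℕ) {F : Type*} [Field F] [Fintype F]

private lemma aux_cube (hF : Fintype.card F = q ^ 3) (x : F) : x ^ (q ^ 3) = x := by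
  rw [← hF]; exact FiniteField.pow_card x

private lemma aux_key (hF : Fintype.card F = q ^ 3) (x : F) :
    x ^ (q * (q ^ 2 + q + 1)) = x ^ (q ^ 2 * (q ^ 2 + q + 1)) := by
  have h3 := aux_cube q hF x
  calc x ^ (q * (q ^ 2 + q + 1)) = x ^ (q ^ 3) * x ^ (q ^ 2) * x ^ q := by
        rw [show q * (q ^ 2 + q + 1) = q ^ 3 + q ^ 2 + q by ring, pow_add, pow_add]
    _ = (x ^ (q ^ 3)) ^ q * x ^ (q ^ 3) * x ^ (q ^ 2) := by rw [h3]; ring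
    _ = x ^ (q ^ 2 * (q ^ 2 + q + 1)) := by
        rw [← pow_mul, ← pow_add, ← pow_add]; congr 1; ring

private lemma aux_frob (hq : IsPrimePow q) (hF : Fintype.card F = q ^ 3) (a b : F) :
    (a - b) ^ q = a ^ q - b ^ q := by
  obtain ⟨p, k, hp, hk, hpk⟩ := hq
  have hprime : Nat.Prime p := Nat.prime_iff.mpr hp
  haveI : Fact (Nat.Prime p) := ⟨hprime⟩
  haveI : CharP F (ringChar F) := ringChar.charP F
  obtain ⟨n, hrp, hn⟩ := FiniteField.card F (ringChar F)
  have hcard : p ^ (3 * k) = (ringChar F) ^ (n : ℕ) := by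
    rw [← hn, hF, ← hpk]; ring
  have hpr : p = ringChar F := by
    have hdvd : p ∣ (ringChar F) ^ (n : ℕ) := by
      rw [← hcard]; exact dvd_pow_self p (by positivity)
    have := hprime.dvd_of_dvd_pow hdvd
    exact ((Nat.prime_dvd_prime_iff_eq hprime hrp).mp this)
  haveI : CharP F p := hpr ▸ ringChar.charP F
  rw [← hpk]
  exact sub_pow_char_pow a b k

end Aux

/-- Projection of the T-plane Π_θ from a point P of Π_κ (with N(θ) ≠ N(κ)) onto the
line z = 0: the denominator D is nonzero, the point (-κθ·D⁻¹, (D⁻¹)^q, 0) is collinear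
with P and Q_t, and it lies in S_{-κθ}. -/
theorem projection_of_Tplane (q : ℕ) (hq : IsPrimePow q) (F : Type*) [Field F] [Fintype F]
    (hF : Fintype.card F = q ^ 3) (θ κ s t : F) (hθ : θ ≠ 0) (hκ : κ ≠ 0) (hs : s ≠ 0)
    (ht : t ≠ 0) (h : θ ^ (q ^ 2 + q + 1) ≠ κ ^ (q ^ 2 + q + 1))
    (D : F) (hD : D = s ^ q * t ^ (q ^ 2) * θ - s ^ (q ^ 2) * t ^ q * κ) :
    D ≠ 0 ∧
    Matrix.det !![s * κ ^ (q + 1), s ^ q, s ^ (q ^ 2) * κ;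
                  t * θ ^ (q + 1), t ^ q, t ^ (q ^ 2) * θ;
                  -(κ * θ) * D⁻¹, (D⁻¹) ^ q, 0] = 0 ∧
    (∃ x : F, x ≠ 0 ∧
      ((-(κ * θ) * D⁻¹, (D⁻¹) ^ q, (0 : F)) : F × F × F) = (x * (-(κ * θ)), x ^ q, 0)) := by
  have hDne : D ≠ 0 := by
    intro h0
    apply h
    have heq : s ^ q * t ^ (q ^ 2) * θ = s ^ (q ^ 2) * t ^ q * κ := by
      exact sub_eq_zero.mp (hD ▸ h0)
    have e1 : (s ^ q * t ^ (q ^ 2) * θ) ^ (q ^ 2 + q + 1)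
        = (s ^ (q ^ 2) * t ^ q * κ) ^ (q ^ 2 + q + 1) := by rw [heq]
    rw [mul_pow, mul_pow, mul_pow, mul_pow, ← pow_mul, ← pow_mul, ← pow_mul, ← pow_mul,
      aux_key q hF s, ← aux_key q hF t] at e1
    have hc : s ^ (q ^ 2 * (q ^ 2 + q + 1)) * t ^ (q * (q ^ 2 + q + 1)) ≠ 0 :=
      mul_ne_zero (pow_ne_zero _ hs) (pow_ne_zero _ ht)
    exact mul_left_cancel₀ hc (by linear_combination e1)
  have hDq : D ^ q = s ^ (q ^ 2) * t * θ ^ q - s * t ^ (q ^ 2) * κ ^ q := by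
    rw [hD, aux_frob q hq hF, mul_pow, mul_pow, mul_pow, mul_pow,
      ← pow_mul, ← pow_mul, ← pow_mul, ← pow_mul,
      show q * q = q ^ 2 by ring, show q ^ 2 * q = q ^ 3 by ring,
      aux_cube q hF s, aux_cube q hF t]
  refine ⟨hDne, ?_, D⁻¹, inv_ne_zero hDne, by rw [mul_comm (D⁻¹) (-(κ * θ))]⟩
  have hE1 : D * D⁻¹ = 1 := mul_inv_cancel₀ hDne
  have hE2 : D ^ q * (D⁻¹) ^ q = 1 := by rw [← mul_pow, hE1, one_pow]
  simp [Matrix.det_fin_three]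
  linear_combination -(κ * θ * (D⁻¹) ^ q) * hDq + (κ * θ * D⁻¹) * hD + (κ * θ) * hE2
    - (κ * θ) * hE1
end

section
/- Let θ, κ ∈ F_{q^3}^*, and suppose t, u, s ∈ F_{q^3}^* are such that the ratio a = (s^q t^{q^2}θ - s^{q^2} t^q κ)/(s^q u^{q^2}θ - s^{q^2} u^q κ) satisfies a^q = a (so that the projected points are equal). Then t = au (t and u represent the same point), or θ/κ = s^{q^2}(t-au)^q / (s^q (t-au)^{q^2}), which implies N(θ) = N(κ). -/
/-- If two projected points coincide, i.e. the ratio a lies in F_q (a^q = a), and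
t ≠ a·u, then θ/κ = s^{q^2}(t-au)^q / (s^q (t-au)^{q^2}), which forces N(θ) = N(κ). -/
theorem projection_injective_ratio (q : ℕ) (hq : IsPrimePow q) (F : Type*) [Field F]
    [Fintype F] (hF : Fintype.card F = q ^ 3) (θ κ s t u a : F)
    (hθ : θ ≠ 0) (hκ : κ ≠ 0) (hs : s ≠ 0) (ht : t ≠ 0) (hu : u ≠ 0)
    (hden : s ^ q * u ^ (q ^ 2) * θ - s ^ (q ^ 2) * u ^ q * κ ≠ 0)
    (ha : a = (s ^ q * t ^ (q ^ 2) * θ - s ^ (q ^ 2) * t ^ q * κ) /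
      (s ^ q * u ^ (q ^ 2) * θ - s ^ (q ^ 2) * u ^ q * κ))
    (haq : a ^ q = a) (htu : t ≠ a * u) :
    θ / κ = (s ^ (q ^ 2) * (t - a * u) ^ q) / (s ^ q * (t - a * u) ^ (q ^ 2)) ∧
      θ ^ (q ^ 2 + q + 1) = κ ^ (q ^ 2 + q + 1) := by
  classical
  obtain ⟨p, n, hp, hn, rfl⟩ := hq
  have hp' : p.Prime := Nat.prime_iff.mpr hp
  haveI := Fact.mk hp'
  haveI hcharp : CharP F p := by
    obtain ⟨r, hr⟩ := CharP.exists F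
    haveI := hr
    have hrp : r.Prime := CharP.char_is_prime F r
    have h0 : (((p ^ n) ^ 3 : ℕ) : F) = 0 := by
      rw [← hF]; exact Nat.cast_card_eq_zero F
    have hdvd : r ∣ (p ^ n) ^ 3 := (CharP.cast_eq_zero_iff F r _).mp h0
    have hrq : r = p :=
      (Nat.prime_dvd_prime_iff_eq hrp hp').mp
        (hrp.dvd_of_dvd_pow (hrp.dvd_of_dvd_pow hdvd))
    rwa [hrq] at hr
  have hsq : ∀ x : F, x ^ ((p ^ n) ^ 2) = (x ^ (p ^ n)) ^ (p ^ n) := fun x => by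
    rw [sq, pow_mul]
  have hpow3 : ∀ x : F, x ^ ((p ^ n) ^ 3) = x := fun x => by
    rw [← hF]; exact FiniteField.pow_card x
  have h1 : (t - a * u) ^ (p ^ n) = t ^ (p ^ n) - a * u ^ (p ^ n) := by
    rw [sub_pow_char_pow, mul_pow, haq]
  have h2 : (t - a * u) ^ ((p ^ n) ^ 2)
      = t ^ ((p ^ n) ^ 2) - a * u ^ ((p ^ n) ^ 2) := by
    rw [hsq, h1, sub_pow_char_pow, mul_pow, haq, ← hsq, ← hsq]
  rw [eq_div_iff hden] at ha
  have E : s ^ (p ^ n) * θ * (t - a * u) ^ ((p ^ n) ^ 2)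
      = s ^ ((p ^ n) ^ 2) * κ * (t - a * u) ^ (p ^ n) := by
    rw [h1, h2]; linear_combination -ha
  have hv : t - a * u ≠ 0 := sub_ne_zero.mpr htu
  constructor
  · rw [div_eq_div_iff hκ (mul_ne_zero (pow_ne_zero _ hs) (pow_ne_zero _ hv))]
    linear_combination E
  · set M := (p ^ n) ^ 2 + p ^ n + 1 with hM
    have e1 : ∀ x : F, x ^ (p ^ n * M) = x ^ M := fun x => by
      have h3 := hpow3 x
      have hE : p ^ n * M = (p ^ n) ^ 3 + ((p ^ n) ^ 2 + p ^ n) := by rw [hM]; ring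
      rw [hE, pow_add, h3, hM, pow_add, pow_add, pow_one]; ring
    have e2 : ∀ x : F, x ^ ((p ^ n) ^ 2 * M) = x ^ M := fun x => by
      have h3 := hpow3 x
      have hE : (p ^ n) ^ 2 * M = (p ^ n) ^ 3 * p ^ n + ((p ^ n) ^ 3 + (p ^ n) ^ 2) := by
        rw [hM]; ring
      rw [hE, pow_add, pow_mul, h3, pow_add, h3, hM, pow_add, pow_add, pow_one]; ring
    have EM := congrArg (· ^ M) E
    simp only [mul_pow, ← pow_mul] at EM
    rw [show p ^ (n * 2) = (p ^ n) ^ 2 from pow_mul p n 2] at EM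
    rw [e1 s, e2 (t - a * u), e2 s, e1 (t - a * u)] at EM
    have := mul_right_cancel₀ (pow_ne_zero M hv) EM
    exact mul_left_cancel₀ (pow_ne_zero M hs) this
end
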